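/- Let L and M be positive integers. There exists a unique real polynomial r of degree at most M + L − 1 such that for all y ∈ ℝ, r(1−y) · s_{L,M}(1−y) + r(y) · s_{L,M}(y) = (2L+1)² · 2^{−2L−2M+1}. -/

import Mathlib

open Polynomial

/-!
Besides `0`, the roots of `s_{L,M}` are the `z = w²` with `(1 + w)^(2L+1) + (1 - w)^(2L+1) = 0`;
then `|1 + w| = |1 - w|`, so `w` is purely imaginary and `Re z ≤ 0`. The roots of `s(1 - y)` thus
have real part `≥ 1`, so `s` and `s(1 - y)` are coprime, and Bezout gives a unique pair `(a, b)`
of degrees `< deg s` with `a s + b s(1 - y) = c`. Substituting `y ↦ 1 - y` produces the pair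
`(b(1 - y), a(1 - y))`, so uniqueness forces `b = a(1 - y)`, and `r = a` is the solution.
-/

/-- The real polynomial `s_{L,M}(y) = y^M ∑_{n=0}^{L} C(2L+1, 2n) y^n`. -/
noncomputable def sPoly (L M : ℕ) : Polynomial ℝ :=
  Polynomial.X ^ M *
    ∑ n ∈ Finset.range (L + 1),
      Polynomial.C ((Nat.choose (2 * L + 1) (2 * n) : ℝ)) * Polynomial.X ^ n

namespace Polynomial

theorem natDegree_lt_of_degree_lt {R : Type*} [Semiring R] {p : R[X]} {n : ℕ} (hn : n ≠ 0)
    (h : p.degree < n) : p.natDegree < n := by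
  rcases eq_or_ne p 0 with rfl | hp
  · simpa [Nat.pos_iff_ne_zero]
  · exact (natDegree_lt_iff_degree_lt hp).mpr h

theorem eq_and_eq_of_mul_add_mul_eq {R : Type*} [CommRing R] [IsDomain R]
    {s t a₁ a₂ b₁ b₂ : R[X]} (h : IsCoprime s t)
    (hb₁ : b₁.natDegree < s.natDegree) (hb₂ : b₂.natDegree < s.natDegree)
    (heq : a₁ * s + b₁ * t = a₂ * s + b₂ * t) : a₁ = a₂ ∧ b₁ = b₂ := by
  have hs : s ≠ 0 := by rintro rfl; simp at hb₁
  have hdvd : s ∣ b₂ - b₁ := h.dvd_of_dvd_mul_right ⟨a₁ - a₂, by linear_combination -heq⟩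
  have hb : b₁ = b₂ := by
    refine (sub_eq_zero.mp (eq_zero_of_dvd_of_natDegree_lt hdvd ?_)).symm
    exact (natDegree_sub_le _ _).trans_lt (max_lt hb₂ hb₁)
  subst hb
  exact ⟨mul_right_cancel₀ hs (by linear_combination heq), rfl⟩

theorem exists_mul_add_mul_eq_C_of_isCoprime {K : Type*} [Field K] {s t : K[X]}
    (h : IsCoprime s t) (hs : s.natDegree ≠ 0) (ht : t.natDegree ≠ 0) (c : K) :
    ∃ a b : K[X], a.natDegree < t.natDegree ∧ b.natDegree < s.natDegree ∧
      a * s + b * t = C c := by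
  obtain ⟨p, q, hp, hq, hpq⟩ := exists_mul_add_mul_eq_C_resultant s t le_rfl le_rfl (.inl hs)
  have hres := resultant_ne_zero s t h
  refine ⟨C (c / s.resultant t) * p, C (c / s.resultant t) * q,
    (natDegree_C_mul_le _ _).trans_lt (natDegree_lt_of_degree_lt ht hp),
    (natDegree_C_mul_le _ _).trans_lt (natDegree_lt_of_degree_lt hs hq), ?_⟩
  have hc : C (c / s.resultant t) * C (s.resultant t) = C c := by
    rw [← C_mul, div_mul_cancel₀ c hres]
  linear_combination C (c / s.resultant t) * hpq + hc

section Reflection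

variable {R : Type*} [CommRing R]

@[simp]
theorem comp_one_sub_X_comp_one_sub_X (p : R[X]) : (p.comp (1 - X)).comp (1 - X) = p := by
  simp [comp_assoc, sub_comp]

@[simp]
theorem natDegree_comp_one_sub_X [IsDomain R] (p : R[X]) :
    (p.comp (1 - X)).natDegree = p.natDegree := by
  rw [natDegree_comp, ← neg_sub, natDegree_neg, ← C_1, natDegree_X_sub_C, mul_one]

theorem existsUnique_comp_one_sub_X_mul_add_mul_eq_C {K : Type*} [Field K] {s : K[X]}
    (hs : s.natDegree ≠ 0) (h : IsCoprime s (s.comp (1 - X))) (c : K) :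
    ∃! r : K[X], r.natDegree < s.natDegree ∧ r.comp (1 - X) * s.comp (1 - X) + r * s = C c := by
  obtain ⟨a, b, ha, hb, hab⟩ :=
    exists_mul_add_mul_eq_C_of_isCoprime h hs (by simpa using hs) c
  rw [natDegree_comp_one_sub_X] at ha
  have hba : b.comp (1 - X) * s + a.comp (1 - X) * s.comp (1 - X) = C c := by
    have := congrArg (·.comp (1 - X)) hab
    simp only [add_comp, mul_comp, C_comp, comp_one_sub_X_comp_one_sub_X] at this
    linear_combination this
  obtain rfl : b = a.comp (1 - X) :=
    (eq_and_eq_of_mul_add_mul_eq h hb (by simpa using ha) (hab.trans hba.symm)).2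
  refine ⟨a, ⟨ha, by rw [add_comm, hab]⟩, fun r ⟨hr, hrc⟩ => ?_⟩
  refine (eq_and_eq_of_mul_add_mul_eq (b₁ := r.comp (1 - X)) (b₂ := a.comp (1 - X)) h
    (by simpa using hr) (by simpa using ha) ?_).1
  rw [add_comm, hrc, hab]

theorem comp_one_sub_X_mul_add_mul_eq_C_iff [IsDomain R] [Infinite R]
    (r s : R[X]) (c : R) :
    r.comp (1 - X) * s.comp (1 - X) + r * s = C c ↔
      ∀ y, r.eval (1 - y) * s.eval (1 - y) + r.eval y * s.eval y = c :=
  ⟨fun h y => by simpa using congrArg (eval y) h, fun h => funext fun y => by simpa using h y⟩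

end Reflection

end Polynomial

open Finset

theorem Finset.sum_range_two_mul {M : Type*} [AddCommMonoid M] (f : ℕ → M) (n : ℕ) :
    ∑ k ∈ range (2 * n), f k = ∑ i ∈ range n, (f (2 * i) + f (2 * i + 1)) := by
  induction n with
  | zero => simp
  | succ n ih => rw [mul_add, sum_range_succ, sum_range_succ, sum_range_succ, ih, add_assoc]

theorem one_add_pow_add_one_sub_pow {R : Type*} [CommRing R] (L : ℕ) (w : R) :
    (1 + w) ^ (2 * L + 1) + (1 - w) ^ (2 * L + 1) =
      2 * ∑ n ∈ range (L + 1), ((2 * L + 1).choose (2 * n) : R) * w ^ (2 * n) := by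
  rw [add_comm 1 w, sub_eq_add_neg, add_comm 1, add_pow, add_pow, ← sum_add_distrib,
    show 2 * L + 1 + 1 = 2 * (L + 1) by ring, sum_range_two_mul, mul_sum]
  refine sum_congr rfl fun n _ => ?_
  simp only [one_pow, mul_one, (even_two_mul n).neg_pow, (odd_two_mul_add_one n).neg_pow]
  ring

theorem Complex.re_eq_zero_of_norm_one_add_eq {w : ℂ} (h : ‖1 + w‖ = ‖1 - w‖) : w.re = 0 := by
  have h2 := congrArg (· ^ 2) h
  simp only [Complex.sq_norm, Complex.normSq_apply, Complex.add_re, Complex.add_im,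
    Complex.sub_re, Complex.sub_im, Complex.one_re, Complex.one_im] at h2
  linarith

theorem re_nonpos_of_sum_choose_eq_zero {L : ℕ} {z : ℂ}
    (h : ∑ n ∈ range (L + 1), ((2 * L + 1).choose (2 * n) : ℂ) * z ^ n = 0) : z.re ≤ 0 := by
  obtain ⟨w, rfl⟩ := IsAlgClosed.exists_pow_nat_eq z two_pos
  have hw : (1 + w) ^ (2 * L + 1) = -(1 - w) ^ (2 * L + 1) := by
    have := one_add_pow_add_one_sub_pow L w
    simp only [pow_mul] at this
    rw [h, mul_zero] at this
    linear_combination this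
  have hre : w.re = 0 := by
    refine Complex.re_eq_zero_of_norm_one_add_eq
      ((pow_left_inj₀ (norm_nonneg _) (norm_nonneg _) (2 * L).succ_ne_zero).mp ?_)
    simpa using congrArg norm hw
  simp [sq, hre, mul_self_nonneg]

theorem re_nonpos_of_aeval_sPoly_eq_zero {L M : ℕ} {z : ℂ} (h : aeval z (sPoly L M) = 0) :
    z.re ≤ 0 := by
  simp only [sPoly, map_mul, map_pow, aeval_X, map_sum, map_natCast] at h
  rcases mul_eq_zero.mp h with hz | hz
  · simp [eq_zero_of_pow_eq_zero hz]
  · exact re_nonpos_of_sum_choose_eq_zero hz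

theorem isCoprime_sPoly_comp_one_sub_X (L M : ℕ) :
    IsCoprime (sPoly L M) ((sPoly L M).comp (1 - X)) := by
  refine (isCoprime_iff_aeval_ne_zero_of_isAlgClosed ℝ ℂ _ _).mpr fun z => not_and_or.mp ?_
  rintro ⟨hz, hz'⟩
  have h1 := re_nonpos_of_aeval_sPoly_eq_zero hz
  have h2 := re_nonpos_of_aeval_sPoly_eq_zero (z := 1 - z) (by simpa [aeval_comp] using hz')
  rw [Complex.sub_re, Complex.one_re] at h2
  linarith

theorem natDegree_sPoly (L M : ℕ) : (sPoly L M).natDegree = M + L := by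
  set Q : ℝ[X] := ∑ n ∈ range (L + 1), C ((Nat.choose (2 * L + 1) (2 * n) : ℝ)) * X ^ n
  have hQL : Q.coeff L ≠ 0 := by
    simp only [Q, finsetSum_coeff, coeff_C_mul_X_pow, sum_ite_eq, mem_range, lt_add_one,
      if_true]
    exact_mod_cast (Nat.choose_pos (by omega)).ne'
  have hQ0 : Q ≠ 0 := fun h => hQL (by rw [h, coeff_zero])
  have hQ : Q.natDegree = L := by
    refine natDegree_eq_of_le_of_coeff_ne_zero ?_ hQL
    refine natDegree_sum_le_of_forall_le _ _ fun n hn => (natDegree_C_mul_X_pow_le _ _).trans ?_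
    simpa [Nat.lt_succ_iff] using hn
  rw [sPoly, natDegree_mul (pow_ne_zero _ X_ne_zero) hQ0, natDegree_X_pow, hQ]

theorem bezout_unique_solution_general (L M : ℕ) (hL : 0 < L) :
    ∃! r : Polynomial ℝ, r.natDegree ≤ M + L - 1 ∧
      ∀ y : ℝ,
        r.eval (1 - y) * (sPoly L M).eval (1 - y) + r.eval y * (sPoly L M).eval y =
          (2 * (L : ℝ) + 1) ^ 2 * (2 : ℝ) ^ (-(2 * (L : ℤ)) - 2 * (M : ℤ) + 1) := by
  generalize (2 * (L : ℝ) + 1) ^ 2 * (2 : ℝ) ^ (-(2 * (L : ℤ)) - 2 * (M : ℤ) + 1) = c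
  have hdeg := natDegree_sPoly L M
  refine (existsUnique_congr fun r => ?_).mp (existsUnique_comp_one_sub_X_mul_add_mul_eq_C
    (by omega) (isCoprime_sPoly_comp_one_sub_X L M) c)
  rw [hdeg, comp_one_sub_X_mul_add_mul_eq_C_iff]
  exact and_congr_left' (by omega)

/-- existence and uniqueness of the Bezout solution `r_{L,M}`. -/
theorem bezout_unique_solution (L M : ℕ) (hL : 0 < L) (hM : 0 < M) :
    ∃! r : Polynomial ℝ, r.natDegree ≤ M + L - 1 ∧
      ∀ y : ℝ,
        r.eval (1 - y) * (sPoly L M).eval (1 - y) + r.eval y * (sPoly L M).eval y =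
          (2 * (L : ℝ) + 1) ^ 2 * (2 : ℝ) ^ (-(2 * (L : ℤ)) - 2 * (M : ℤ) + 1) :=
  bezout_unique_solution_general L M hL
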